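/- arXiv:2107.01169 — 3 statements merged into one kernel-verified Lean document; each statement's English description precedes it below -/
import Mathlib

section
/- Let (v_t, b_z) be a resolvable BIBD with z ≥ 2. Then for every integer k with 2 ≤ k ≤ 1 + (v−1)/(z−1) there exists a k-server PIR [m,v]-code with m = v + (k−1)·v/z. -/
/-- `G` is the generator matrix of a `k`-server PIR `[m,s]`-code. -/
def IsPIRMatrix (s m k : ℕ) (G : Matrix (Fin s) (Fin m) (ZMod 2)) : Prop :=
  ∀ i : Fin s, ∃ R : Fin k → Finset (Fin m),
    (Pairwise fun a b => Disjoint (R a) (R b)) ∧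
    ∀ a : Fin k, (∑ j ∈ R a, fun r => G r j) = Pi.single i (1 : ZMod 2)

/-- There exists a `k`-server PIR `[m,s]`-code. -/
def ExistsPIRCode (s m k : ℕ) : Prop :=
  ∃ G : Matrix (Fin s) (Fin m) (ZMod 2), IsPIRMatrix s m k G


/-- A `(v_t, b_z)`-configuration: `v` points, `b` lines (subsets of the point set), each
line has `z` points, each point lies on `t` lines, and two distinct points lie on at most
one common line. -/
structure CombConfig (X : Type*) [DecidableEq X] [Fintype X] (v b t z : ℕ) where
  lines : Finset (Finset X)
  card_points : Fintype.card X = v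
  card_lines : lines.card = b
  line_size : ∀ l ∈ lines, l.card = z
  point_degree : ∀ x : X, (lines.filter fun l => x ∈ l).card = t
  two_points : ∀ x y : X, x ≠ y → (lines.filter fun l => x ∈ l ∧ y ∈ l).card ≤ 1

/-- A parallel class: a set of lines partitioning the point set. -/
def IsParallelClass {X : Type*} [DecidableEq X] [Fintype X]
    (lines C : Finset (Finset X)) : Prop :=
  C ⊆ lines ∧ ∀ x : X, ∃! l, l ∈ C ∧ x ∈ l

/-- A resolution: a partition of the set of lines into parallel classes. -/
def IsResolution {X : Type*} [DecidableEq X] [Fintype X]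
    (lines : Finset (Finset X)) (R : Finset (Finset (Finset X))) : Prop :=
  (∀ C ∈ R, IsParallelClass lines C ∧ C.Nonempty) ∧ ∀ l ∈ lines, ∃! C, C ∈ R ∧ l ∈ C

/-!
Use the systematic generator matrix `[I | N]`, where `N` is the point-line incidence matrix of the
lines in `k - 1` parallel classes of the resolution; there are enough classes because the lines
through a point lie in pairwise distinct classes, and there are `(v - 1) / (z - 1)` of them.
A point `x` is recovered from its own unit column and, for each chosen class, from the column of
the line `l ∋ x` of that class together with the unit columns of the other points of `l`, which
cancel over `ZMod 2`. Lines of different classes through `x` meet only in `x`, so these `k`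
recovery sets are pairwise disjoint.
-/

open Finset

section PIRColumns

variable {κ ι : Type*} [DecidableEq κ]

/-- The condition of `IsPIRMatrix` at row `i`, for a generator matrix given by its columns. -/
def HasRecoverySets (col : ι → κ → ZMod 2) (i : κ) (k : ℕ) : Prop :=
  ∃ R : Fin k → Finset ι, (Pairwise fun a b => Disjoint (R a) (R b)) ∧
    ∀ a, ∑ j ∈ R a, col j = Pi.single i 1

theorem hasRecoverySets_of_le_card {ρ : Type*} [Fintype ρ] {col : ι → κ → ZMod 2} {i : κ}
    {k : ℕ} (R : ρ → Finset ι) (hdisj : Pairwise fun a b => Disjoint (R a) (R b))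
    (hsum : ∀ a, ∑ j ∈ R a, col j = Pi.single i 1) (hk : k ≤ Fintype.card ρ) :
    HasRecoverySets col i k := by
  obtain ⟨e⟩ : Nonempty (Fin k ↪ ρ) :=
    Function.Embedding.nonempty_of_card_le (by rwa [Fintype.card_fin])
  exact ⟨R ∘ e, hdisj.comp_of_injective e.injective, fun a => hsum (e a)⟩

theorem existsPIRCode_of_hasRecoverySets {s m k : ℕ} {col : ι → κ → ZMod 2}
    (h : ∀ i, HasRecoverySets col i k) (eκ : κ ≃ Fin s) (eι : ι ≃ Fin m) :
    ExistsPIRCode s m k := by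
  refine ⟨Matrix.of fun r c => col (eι.symm c) (eκ.symm r), fun i => ?_⟩
  obtain ⟨R, hdisj, hsum⟩ := h (eκ.symm i)
  refine ⟨fun a => (R a).map eι.toEmbedding, fun a b hab => (disjoint_map _).2 (hdisj hab),
    fun a => ?_⟩
  ext r
  rw [sum_map, Finset.sum_apply]
  simp only [Matrix.of_apply, Equiv.toEmbedding_apply, Equiv.symm_apply_apply]
  rw [← Finset.sum_apply, hsum]
  simp [Pi.single_apply]

end PIRColumns

section LineCode

variable {X : Type*} [DecidableEq X] {L : Finset (Finset X)}

/-- The columns of the systematic generator matrix `[I | N]`, where `N` is the point-line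
incidence matrix of `L`. -/
def lineCode (L : Finset (Finset X)) : X ⊕ L → X → ZMod 2 :=
  Sum.elim (fun y => Pi.single y 1) fun l => ∑ y ∈ (l : Finset X), Pi.single y 1

def lineRecoverySet (x : X) (l : L) : Finset (X ⊕ L) :=
  insert (.inr l) (((l : Finset X).erase x).map .inl)

theorem sum_lineCode_lineRecoverySet {x : X} {l : L} (hx : x ∈ (l : Finset X)) :
    ∑ c ∈ lineRecoverySet x l, lineCode L c = Pi.single x 1 := by
  rw [lineRecoverySet, sum_insert (by simp), sum_map]
  simp only [lineCode, Sum.elim_inr, Function.Embedding.inl_apply, Sum.elim_inl]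
  rw [← add_sum_erase _ _ hx, add_assoc]
  convert add_zero _
  exact funext fun _ => CharTwo.add_self_eq_zero _

theorem inl_notMem_lineRecoverySet (x : X) (l : L) : .inl x ∉ lineRecoverySet x l := by
  simp [lineRecoverySet]

theorem disjoint_lineRecoverySet {x : X} {l l' : L} (hx : x ∈ (l : Finset X))
    (hx' : x ∈ (l' : Finset X)) (hne : l ≠ l') (hmeet : #((l : Finset X) ∩ l') ≤ 1) :
    Disjoint (lineRecoverySet x l) (lineRecoverySet x l') := by
  rw [disjoint_left]
  intro c hc hc'
  simp only [lineRecoverySet, mem_insert, mem_map, mem_erase, Function.Embedding.inl_apply]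
    at hc hc'
  rcases hc with rfl | ⟨y, ⟨hyx, hy⟩, rfl⟩ <;> rcases hc' with h | ⟨y', ⟨-, hy'⟩, h⟩
  · exact hne (Sum.inr_injective h)
  · cases h
  · cases h
  · obtain rfl := Sum.inl_injective h
    exact hyx (card_le_one.1 hmeet y' (mem_inter.2 ⟨hy, hy'⟩) x (mem_inter.2 ⟨hx, hx'⟩))

theorem hasRecoverySets_lineCode (hL : (L : Set (Finset X)).Pairwise fun l l' => #(l ∩ l') ≤ 1)
    (x : X) {k : ℕ} (hk : k ≤ #{l ∈ L | x ∈ l} + 1) : HasRecoverySets (lineCode L) x k := by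
  refine hasRecoverySets_of_le_card (ρ := Option {l : L // x ∈ (l : Finset X)})
    (fun o => o.elim {.inl x} fun l => lineRecoverySet x l) ?_ ?_ ?_
  · rintro (_ | l) (_ | l') hne
    · exact absurd rfl hne
    · exact disjoint_singleton_left.2 (inl_notMem_lineRecoverySet x l'.1)
    · exact disjoint_singleton_right.2 (inl_notMem_lineRecoverySet x l.1)
    · have hne : l.1 ≠ l'.1 := fun h => hne (congrArg some (Subtype.ext h))
      exact disjoint_lineRecoverySet l.2 l'.2 hne (hL l.1.2 l'.1.2 (Subtype.coe_ne_coe.2 hne))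
  · rintro (_ | l)
    · exact sum_singleton _ _
    · exact sum_lineCode_lineRecoverySet l.2
  · rwa [Fintype.card_option, Fintype.card_subtype, univ_eq_attach, filter_attach (x ∈ ·),
      card_map, card_attach]

end LineCode

section Resolution

variable {X : Type*} [DecidableEq X] [Fintype X] {lines C : Finset (Finset X)}
  {R S : Finset (Finset (Finset X))}

theorem IsParallelClass.card_filter_mem (hC : IsParallelClass lines C) (x : X) :
    #{l ∈ C | x ∈ l} = 1 := by
  obtain ⟨l, hl, hu⟩ := hC.2 x
  exact card_eq_one.2 ⟨l, eq_singleton_iff_unique_mem.2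
    ⟨mem_filter.2 hl, fun l' hl' => hu l' (mem_filter.1 hl')⟩⟩

theorem IsParallelClass.card_mul_eq {z : ℕ} (hC : IsParallelClass lines C)
    (hz : ∀ l ∈ lines, #l = z) : #C * z = Fintype.card X :=
  calc #C * z = ∑ l ∈ C, #l := by
        rw [sum_congr rfl fun l hl => hz l (hC.1 hl), sum_const, smul_eq_mul]
    _ = Fintype.card X := by rw [sum_card hC.card_filter_mem, mul_one]

theorem IsResolution.eq_of_mem (hR : IsResolution lines R) {C C' : Finset (Finset X)}
    (hC : C ∈ R) (hC' : C' ∈ R) {l : Finset X} (hl : l ∈ C) (hl' : l ∈ C') : C = C' :=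
  (hR.2 l ((hR.1 C hC).1.1 hl)).unique ⟨hC, hl⟩ ⟨hC', hl'⟩

theorem IsResolution.pairwiseDisjoint (hR : IsResolution lines R) :
    (R : Set (Finset (Finset X))).PairwiseDisjoint id :=
  fun _ hC _ hC' hne => disjoint_left.2 fun _ hl hl' => hne (hR.eq_of_mem hC hC' hl hl')

theorem IsResolution.biUnion_subset (hR : IsResolution lines R) (hS : S ⊆ R) :
    S.biUnion id ⊆ lines :=
  Finset.biUnion_subset.2 fun C hC => (hR.1 C (hS hC)).1.1

theorem IsResolution.biUnion_eq (hR : IsResolution lines R) : R.biUnion id = lines := by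
  refine (hR.biUnion_subset subset_rfl).antisymm fun l hl => ?_
  obtain ⟨C, ⟨hC, hlC⟩, -⟩ := hR.2 l hl
  exact mem_biUnion.2 ⟨C, hC, hlC⟩

theorem IsResolution.card_filter_mem_biUnion (hR : IsResolution lines R) (hS : S ⊆ R)
    (x : X) : #{l ∈ S.biUnion id | x ∈ l} = #S := by
  rw [filter_biUnion, Finset.card_biUnion fun C hC C' hC' hne =>
    disjoint_filter_filter (hR.pairwiseDisjoint (hS hC) (hS hC') hne)]
  simp only [id]
  rw [sum_congr rfl fun C hC => (hR.1 C (hS hC)).1.card_filter_mem x, sum_const, smul_eq_mul,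
    mul_one]

theorem IsResolution.card_biUnion {z : ℕ} (hR : IsResolution lines R) (hS : S ⊆ R)
    (hsize : ∀ l ∈ lines, #l = z) (hz : 0 < z) :
    #(S.biUnion id) = #S * (Fintype.card X / z) := by
  rw [Finset.card_biUnion (hR.pairwiseDisjoint.subset hS)]
  simp only [id]
  rw [sum_congr rfl fun C hC =>
    Nat.eq_div_of_mul_eq_left hz.ne' ((hR.1 C (hS hC)).1.card_mul_eq hsize), sum_const,
    smul_eq_mul]

end Resolution

namespace CombConfig

variable {X : Type*} [DecidableEq X] [Fintype X] {v b t z : ℕ} (cfg : CombConfig X v b t z)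

theorem pairwise_card_inter_le_one :
    (cfg.lines : Set (Finset X)).Pairwise fun l l' => #(l ∩ l') ≤ 1 := by
  intro l hl l' hl' hne
  refine card_le_one.2 fun x hx y hy => ?_
  by_contra hxy
  rw [mem_inter] at hx hy
  exact (cfg.two_points x y hxy).not_gt (one_lt_card.2
    ⟨l, mem_filter.2 ⟨hl, hx.1, hy.1⟩, l', mem_filter.2 ⟨hl', hx.2, hy.2⟩, hne⟩)

theorem degree_mul_eq
    (hbibd : ∀ x y : X, x ≠ y → (cfg.lines.filter fun l => x ∈ l ∧ y ∈ l).card = 1)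
    (x : X) : t * (z - 1) = v - 1 := by
  have hcount := sum_card_inter (s := univ.erase x) (B := {l ∈ cfg.lines | x ∈ l}) (n := 1)
    fun y hy => by rw [filter_filter]; exact hbibd x y (ne_of_mem_erase hy).symm
  rwa [sum_congr rfl fun l hl => by
      rw [erase_inter, univ_inter, card_erase_of_mem (mem_filter.1 hl).2,
        cfg.line_size l (mem_filter.1 hl).1],
    sum_const, smul_eq_mul, cfg.point_degree, card_erase_of_mem (mem_univ x), card_univ,
    cfg.card_points, mul_one] at hcount

theorem div_le_card_of_isResolution
    (hbibd : ∀ x y : X, x ≠ y → (cfg.lines.filter fun l => x ∈ l ∧ y ∈ l).card = 1)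
    {R : Finset (Finset (Finset X))} (hR : IsResolution cfg.lines R) :
    (v - 1) / (z - 1) ≤ #R := by
  rcases isEmpty_or_nonempty X with hX | ⟨⟨x⟩⟩
  · simp [← cfg.card_points]
  · refine Nat.div_le_of_le_mul ?_
    rw [← cfg.degree_mul_eq hbibd x, ← cfg.point_degree x, ← hR.biUnion_eq,
      hR.card_filter_mem_biUnion subset_rfl, mul_comm]

end CombConfig

theorem pir_code_of_resolvable_bibd_general {X : Type*} [DecidableEq X] [Fintype X]
    (v b t z : ℕ) (cfg : CombConfig X v b t z)
    (hbibd : ∀ x y : X, x ≠ y → (cfg.lines.filter fun l => x ∈ l ∧ y ∈ l).card = 1)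
    (hres : ∃ R, IsResolution cfg.lines R)
    (k : ℕ) (hk : k ≤ 1 + (v - 1) / (z - 1)) :
    ExistsPIRCode v (v + (k - 1) * (v / z)) k := by
  obtain ⟨R, hR⟩ := hres
  obtain ⟨S, hSR, hS⟩ : ∃ S ⊆ R, #S = k - 1 :=
    exists_subset_card_eq (by have := cfg.div_le_card_of_isResolution hbibd hR; omega)
  have hcode (x : X) : HasRecoverySets (lineCode (S.biUnion id)) x k :=
    hasRecoverySets_lineCode (cfg.pairwise_card_inter_le_one.mono (hR.biUnion_subset hSR)) x
      (by rw [hR.card_filter_mem_biUnion hSR]; omega)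
  have hcard : #(S.biUnion id) = (k - 1) * (v / z) := by
    rcases Nat.eq_zero_or_pos z with rfl | hz
    · simp only [zero_tsub, Nat.div_zero, add_zero] at hk
      obtain rfl : S = ∅ := card_eq_zero.1 (by omega)
      simp
    · rw [hR.card_biUnion hSR cfg.line_size hz, hS, cfg.card_points]
  exact existsPIRCode_of_hasRecoverySets hcode (Fintype.equivFinOfCardEq cfg.card_points)
    (Fintype.equivFinOfCardEq (by rw [Fintype.card_sum, Fintype.card_coe, hcard, cfg.card_points]))

/-- Let `(v_t, b_z)` be a resolvable BIBD (a configuration in which any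
two distinct points lie on exactly one common line) with `z ≥ 2`. Then for every
`2 ≤ k ≤ 1 + (v-1)/(z-1)` there exists a `k`-server PIR `[v + (k-1)·v/z, v]`-code. -/
theorem pir_code_of_resolvable_bibd {X : Type*} [DecidableEq X] [Fintype X]
    (v b t z : ℕ) (cfg : CombConfig X v b t z) (hz : 2 ≤ z)
    (hbibd : ∀ x y : X, x ≠ y → (cfg.lines.filter fun l => x ∈ l ∧ y ∈ l).card = 1)
    (hres : ∃ R, IsResolution cfg.lines R)
    (k : ℕ) (hk2 : 2 ≤ k) (hk : k ≤ 1 + (v - 1) / (z - 1)) :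
    ExistsPIRCode v (v + (k - 1) * (v / z)) k :=
  pir_code_of_resolvable_bibd_general v b t z cfg hbibd hres k hk
end

section
/- Let q be a prime power, N ≥ 2 an integer, and let k and s be integers with 2 ≤ k ≤ 1 + (q^N−1)/(q−1) − q^{N−1} and 2·q^{N−1} ≤ s ≤ q^N. Then there exists a k-server PIR [m,s]-code with m = s + (k−1)·q^{N−1}. -/
/-!
Write `AG(N, q)` as `F × V` with `V = F^(N-1)` and place the `s` coordinates at distinct points.
Lines with direction `(1, v)`, which is not parallel to the hyperplane `{0} × V`, are the fibres
of `(a, x) ↦ x - a • v`, and two lines with different such directions meet in at most one point.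
There are `q^(N-1)` such directions, and the bound on `k` gives `k - 1 ≤ q^(N-1)`.
Take the generator matrix `[I | incidence matrix of all lines in k - 1 such directions]`.
Coordinate `i` is recovered from its own column, and, for each direction, from the column of the
line `L` through `i` together with the unit columns of `L \ {i}`, since over `ZMod 2` they add up
to `e_i`. Recovery sets of different directions are disjoint because their lines through `i`
share only `i`.
-/

open Finset Function

theorem existsPIRCode_of_recoverySets {s : ℕ} {γ κ : Type*} [Fintype γ] [Fintype κ]
    (G : Matrix (Fin s) γ (ZMod 2))
    (hG : ∀ i, ∃ R : κ → Finset γ, Pairwise (Disjoint on R) ∧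
      ∀ a, ∑ j ∈ R a, (fun r => G r j) = Pi.single i 1) :
    ExistsPIRCode s (Fintype.card γ) (Fintype.card κ) := by
  let e := Fintype.equivFin γ
  let σ := Fintype.equivFin κ
  refine ⟨G.submatrix id e.symm, fun i => ?_⟩
  obtain ⟨R, hdisj, hsum⟩ := hG i
  refine ⟨fun a => (R (σ.symm a)).map e.toEmbedding, fun a b hab => ?_, fun a => ?_⟩
  · exact (disjoint_map _).2 (hdisj (σ.symm.injective.ne hab))
  · simpa [sum_map] using hsum _

section Packing

variable {α ι β : Type*} [Fintype α] [DecidableEq β]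

def lineIncidenceMatrix (f : ι → α → β) : Matrix α (ι × β) (ZMod 2) :=
  Matrix.of fun r L => if f L.1 r = L.2 then 1 else 0

def line (f : ι → α → β) (b : ι) (i : α) : Finset α :=
  univ.filter fun j => f b j = f b i

theorem eq_of_mem_line_of_mem_line {f : ι → α → β} {b b' : ι}
    (hf : Injective fun x => (f b x, f b' x)) {i j : α}
    (hj : j ∈ line f b i) (hj' : j ∈ line f b' i) : j = i := by
  simp only [line, mem_filter, mem_univ, true_and] at hj hj'
  exact hf (Prod.ext hj hj')

variable [DecidableEq α]

def packingMatrix (f : ι → α → β) : Matrix α (α ⊕ ι × β) (ZMod 2) :=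
  Matrix.fromCols 1 (lineIncidenceMatrix f)

theorem lineIncidenceMatrix_col_eq_sum (f : ι → α → β) (b : ι) (i : α) :
    (fun r => lineIncidenceMatrix f r (b, f b i)) = ∑ j ∈ line f b i, Pi.single j 1 := by
  funext r
  simp [lineIncidenceMatrix, line, Finset.sum_apply, Pi.single_apply]

variable [DecidableEq ι]

def recoverySet (f : ι → α → β) (i : α) : Option ι → Finset (α ⊕ ι × β)
  | none => {.inl i}
  | some b => insert (.inr (b, f b i)) (((line f b i).erase i).map Embedding.inl)

theorem sum_packingMatrix_recoverySet (f : ι → α → β) (i : α) (a : Option ι) :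
    ∑ j ∈ recoverySet f i a, (fun r => packingMatrix f r j) = Pi.single i 1 := by
  have hunit : ∀ j, (fun r => packingMatrix f r (.inl j)) = Pi.single j 1 := by
    intro j
    funext r
    simp [packingMatrix, Matrix.one_apply, Pi.single_apply]
  cases a with
  | none => simp [recoverySet, hunit]
  | some b =>
    have hi : i ∈ line f b i := by simp [line]
    have hcol : (fun r => packingMatrix f r (.inr (b, f b i))) = ∑ j ∈ line f b i, Pi.single j 1 :=
      lineIncidenceMatrix_col_eq_sum f b i
    rw [recoverySet, sum_insert (by simp), sum_map, hcol, ← add_sum_erase _ _ hi, add_assoc]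
    simp only [Embedding.inl_apply, hunit]
    rw [ZModModule.add_self, add_zero]

theorem pairwise_disjoint_recoverySet {f : ι → α → β}
    (hf : Pairwise fun b b' => Injective fun x => (f b x, f b' x)) (i : α) :
    Pairwise (Disjoint on recoverySet f i) := by
  rintro (_ | b) (_ | b') hne
  · exact absurd rfl hne
  · simp [recoverySet, onFun]
  · simp [recoverySet, onFun]
  · have hbb' : b ≠ b' := fun h => hne (congrArg some h)
    refine disjoint_left.2 fun x hx hx' => ?_
    simp only [recoverySet, mem_insert, mem_map, mem_erase, Embedding.inl_apply] at hx hx'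
    rcases hx with rfl | ⟨j, ⟨hji, hj⟩, rfl⟩
    · simp only [Sum.inr.injEq, Prod.mk.injEq, reduceCtorEq, and_false, exists_false,
        or_false] at hx'
      exact hbb' hx'.1
    · simp only [reduceCtorEq, Sum.inl.injEq, exists_eq_right, false_or] at hx'
      exact hji (eq_of_mem_line_of_mem_line (hf hbb') hj hx'.2)

end Packing

theorem existsPIRCode_of_pairwise_injective {s : ℕ} {ι β : Type*} [Fintype ι] [Fintype β]
    [DecidableEq ι] [DecidableEq β] (f : ι → Fin s → β)
    (hf : Pairwise fun b b' => Injective fun x => (f b x, f b' x)) :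
    ExistsPIRCode s (s + Fintype.card ι * Fintype.card β) (Fintype.card ι + 1) := by
  simpa using existsPIRCode_of_recoverySets (κ := Option ι) (packingMatrix f) fun i =>
    ⟨recoverySet f i, pairwise_disjoint_recoverySet hf i, sum_packingMatrix_recoverySet f i⟩

section Affine

variable {F V : Type*} [Field F] [AddCommGroup V] [Module F V]

def parallelProj (v : V) (p : F × V) : V := p.2 - p.1 • v

theorem injective_parallelProj_prod {v w : V} (hvw : v ≠ w) :
    Injective fun p : F × V => (parallelProj v p, parallelProj w p) := by
  rintro ⟨a, x⟩ ⟨a', x'⟩ h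
  simp only [parallelProj, Prod.mk.injEq] at h
  obtain ⟨hv, hw⟩ := h
  have hsmul : (a - a') • (w - v) = 0 := by linear_combination (norm := module) hv - hw
  have ha : a = a' := sub_eq_zero.1 ((smul_eq_zero.1 hsmul).resolve_right (sub_ne_zero.2 hvw.symm))
  subst ha
  simpa using hv

theorem existsPIRCode_of_affine [Fintype F] [Fintype V] [DecidableEq V] {s k : ℕ}
    (hs : s ≤ Fintype.card F * Fintype.card V) (hk : k - 1 ≤ Fintype.card V) (hk0 : 1 ≤ k) :
    ExistsPIRCode s (s + (k - 1) * Fintype.card V) k := by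
  obtain ⟨pts⟩ : Nonempty (Fin s ↪ F × V) := Embedding.nonempty_of_card_le (by simpa using hs)
  obtain ⟨dirs⟩ : Nonempty (Fin (k - 1) ↪ V) := Embedding.nonempty_of_card_le (by simpa using hk)
  have := existsPIRCode_of_pairwise_injective (fun b x => parallelProj (dirs b) (pts x))
    fun b b' hbb' => (injective_parallelProj_prod (dirs.injective.ne hbb')).comp pts.injective
  rwa [Fintype.card_fin, Nat.sub_add_cancel hk0] at this

end Affine

theorem Nat.geom_div_lt_two_mul_pow {q : ℕ} (hq : 2 ≤ q) (N : ℕ) :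
    (q ^ N - 1) / (q - 1) < 2 * q ^ (N - 1) := by
  rw [Nat.div_lt_iff_lt_mul (by omega)]
  rcases N with _ | M
  · simpa using (by omega : 0 < 2 * (q - 1))
  · have ht : 1 ≤ q ^ M := Nat.one_le_pow _ _ (by omega)
    rw [pow_succ, Nat.add_sub_cancel]
    zify [ht, show 1 ≤ q by omega, show 1 ≤ q ^ M * q by nlinarith]
    nlinarith

theorem pir_code_of_restricted_affine_packing_general (q N : ℕ) (hq : IsPrimePow q)
    (k s : ℕ) (hk2 : 2 ≤ k) (hk : k ≤ 1 + (q ^ N - 1) / (q - 1) - q ^ (N - 1))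
    (hs2 : s ≤ q ^ N) :
    ExistsPIRCode s (s + (k - 1) * q ^ (N - 1)) k := by
  classical
  obtain ⟨p, n, hp, hn, rfl⟩ := hq
  have : Fact p.Prime := ⟨hp.nat_prime⟩
  let F := GaloisField p n
  have : Fintype F := Fintype.ofFinite F
  have hF : Fintype.card F = p ^ n := by
    rw [← Nat.card_eq_fintype_card, GaloisField.card p n hn.ne']
  have hV : Fintype.card (Fin (N - 1) → F) = (p ^ n) ^ (N - 1) := by simp [hF]
  have hq2 : 2 ≤ p ^ n := hp.nat_prime.two_le.trans (Nat.le_self_pow hn.ne' p)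
  have hpow : (p ^ n) ^ N ≤ p ^ n * (p ^ n) ^ (N - 1) := by
    rw [← pow_succ']
    exact Nat.pow_le_pow_right (by omega) (by omega)
  have hdiv := Nat.geom_div_lt_two_mul_pow hq2 N
  rw [← hV]
  exact existsPIRCode_of_affine (F := F) (by rw [hF, hV]; omega) (by omega) (by omega)

/-- Let `q` be a prime power, `N ≥ 2`, and let `k, s` be integers
with `2 ≤ k ≤ 1 + (q^N - 1)/(q - 1) - q^{N-1}` and `2·q^{N-1} ≤ s ≤ q^N`. Then there
exists a `k`-server PIR `[s + (k-1)·q^{N-1}, s]`-code. -/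
theorem pir_code_of_restricted_affine_packing (q N : ℕ) (hq : IsPrimePow q) (hN : 2 ≤ N)
    (k s : ℕ) (hk2 : 2 ≤ k) (hk : k ≤ 1 + (q ^ N - 1) / (q - 1) - q ^ (N - 1))
    (hs1 : 2 * q ^ (N - 1) ≤ s) (hs2 : s ≤ q ^ N) :
    ExistsPIRCode s (s + (k - 1) * q ^ (N - 1)) k :=
  pir_code_of_restricted_affine_packing_general q N hq k s hk2 hk hs2
end

section
/- Let h ≥ 2 and ℓ ≥ 2 be integers and let v be an integer with 2 ≤ v ≤ ℓ; set s = v·h^{ℓ−1}. Then there exists an (h+1)-server PIR [m,s]-code with m = s + h^ℓ. -/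
open Finset Function

def Matrix.IsPIRGenerator {S M : Type*} [DecidableEq S] (k : ℕ) (G : Matrix S M (ZMod 2)) :
    Prop :=
  ∀ i : S, ∃ R : Fin k → Finset M,
    (Pairwise fun a b => Disjoint (R a) (R b)) ∧
    ∀ a : Fin k, (∑ j ∈ R a, fun r => G r j) = Pi.single i (1 : ZMod 2)

theorem Matrix.IsPIRGenerator.existsPIRCode {S M : Type*} [Fintype S] [Fintype M]
    [DecidableEq S] {s m k : ℕ} {G : Matrix S M (ZMod 2)} (hG : G.IsPIRGenerator k)
    (hS : Fintype.card S = s) (hM : Fintype.card M = m) : ExistsPIRCode s m k := by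
  let eS := (Fintype.equivFinOfCardEq hS).symm
  let eM := (Fintype.equivFinOfCardEq hM).symm
  refine ⟨G.submatrix eS eM, fun i => ?_⟩
  obtain ⟨R, hdisj, hsum⟩ := hG (eS i)
  refine ⟨fun a => (R a).map eM.symm.toEmbedding,
    fun a b hab => disjoint_map _ |>.mpr (hdisj hab), fun a => ?_⟩
  calc (∑ j ∈ (R a).map eM.symm.toEmbedding, fun r => G (eS r) (eM j))
      = (∑ j ∈ R a, fun r => G r j) ∘ eS := by
        ext r
        simp [Finset.sum_apply]
    _ = Pi.single i 1 := by rw [hsum, Pi.single_comp_equiv, Equiv.symm_apply_apply]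

theorem Fin.pairwise_disjoint_cons {α : Type*} [Lattice α] [OrderBot α] {k : ℕ} {x : α}
    {f : Fin k → α} (hx : ∀ a, Disjoint x (f a)) (hf : Pairwise (Disjoint on f)) :
    Pairwise (Disjoint on (Fin.cons x f : Fin (k + 1) → α)) := by
  intro a b hab
  cases a using Fin.cases <;> cases b using Fin.cases
  · exact absurd rfl hab
  · exact hx _
  · exact (hx _).symm
  · exact hf fun h => hab (congrArg Fin.succ h)

section DualConfiguration

variable {P β : Type*} [DecidableEq P] [DecidableEq β] (blocks : β → Finset P)

def blockIncidence : Matrix β P (ZMod 2) :=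
  Matrix.of fun b p => if p ∈ blocks b then 1 else 0

def dualGenerator : Matrix β (β ⊕ P) (ZMod 2) :=
  Matrix.fromCols 1 (blockIncidence blocks)

def pointRecoverySet [Fintype β] (b : β) (p : P) : Finset (β ⊕ P) :=
  insert (.inr p) ((univ.filter fun b' => b' ≠ b ∧ p ∈ blocks b').map .inl)

theorem col_dualGenerator_inl (b : β) :
    (fun r => dualGenerator blocks r (.inl b)) = Pi.single b 1 := by
  ext r
  simp [dualGenerator, Matrix.one_apply, Pi.single_apply]

theorem col_dualGenerator_inr [Fintype β] (p : P) :
    (fun r => dualGenerator blocks r (.inr p)) =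
      ∑ b ∈ univ.filter (p ∈ blocks ·), Pi.single b 1 := by
  ext r
  simp [dualGenerator, blockIncidence, Finset.sum_apply, Pi.single_apply]

theorem sum_pointRecoverySet [Fintype β] {b : β} {p : P} (hp : p ∈ blocks b) :
    (∑ j ∈ pointRecoverySet blocks b p, fun r => dualGenerator blocks r j) = Pi.single b 1 := by
  set others := univ.filter fun b' => b' ≠ b ∧ p ∈ blocks b'
  have hsplit : univ.filter (p ∈ blocks ·) = insert b others := by
    ext b'
    by_cases b' = b <;> simp_all [others]
  rw [pointRecoverySet, sum_insert (by simp), sum_map, col_dualGenerator_inr, hsplit,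
    sum_insert (by simp [others])]
  simp only [Embedding.inl_apply, col_dualGenerator_inl]
  rw [add_assoc, ZModModule.add_self, add_zero]

theorem inl_notMem_pointRecoverySet [Fintype β] (b : β) (p : P) :
    .inl b ∉ pointRecoverySet blocks b p := by
  simp [pointRecoverySet]

theorem disjoint_pointRecoverySet [Fintype β]
    (hmeet : Pairwise fun b b' => #(blocks b ∩ blocks b') ≤ 1)
    {b : β} {p q : P} (hp : p ∈ blocks b) (hq : q ∈ blocks b) (hpq : p ≠ q) :
    Disjoint (pointRecoverySet blocks b p) (pointRecoverySet blocks b q) := by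
  rw [disjoint_left]
  rintro (b' | p') hxp hxq
  · simp [pointRecoverySet] at hxp hxq
    exact hpq <| card_le_one.mp (hmeet hxp.1) p (mem_inter.2 ⟨hxp.2, hp⟩) q
      (mem_inter.2 ⟨hxq.2, hq⟩)
  · simp_all [pointRecoverySet]

theorem isPIRGenerator_dualGenerator [Fintype β] {k : ℕ} (hcard : ∀ b, #(blocks b) = k)
    (hmeet : Pairwise fun b b' => #(blocks b ∩ blocks b') ≤ 1) :
    (dualGenerator blocks).IsPIRGenerator (k + 1) := by
  intro b
  let e := (equivFinOfCardEq (hcard b)).symm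
  refine ⟨Fin.cons {.inl b} fun a => pointRecoverySet blocks b (e a),
    Fin.pairwise_disjoint_cons
      (fun _ => disjoint_singleton_left.mpr (inl_notMem_pointRecoverySet blocks b _))
      (fun a a' ha => disjoint_pointRecoverySet blocks hmeet (e a).2 (e a').2
        fun h => ha (e.injective (Subtype.ext h))),
    Fin.cases ?_ fun a => sum_pointRecoverySet blocks (e a).2⟩
  simp [col_dualGenerator_inl]

end DualConfiguration

section AxisLines

variable {ι α : Type*} [DecidableEq ι] [Fintype α]

def axisLine (i : ι) (z : {j // j ≠ i} → α) : Finset (ι → α) :=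
  univ.map ((Embedding.sectL α z).trans (Equiv.funSplitAt i α).symm.toEmbedding)

theorem card_axisLine (i : ι) (z : {j // j ≠ i} → α) : #(axisLine i z) = Fintype.card α := by
  simp [axisLine]

theorem mem_axisLine {i : ι} {z : {j // j ≠ i} → α} {p : ι → α} :
    p ∈ axisLine i z ↔ ∀ j : {j // j ≠ i}, p j = z j := by
  simp only [axisLine, mem_map, mem_univ, true_and, Embedding.trans_apply, Embedding.sectL_apply,
    Equiv.coe_toEmbedding, Equiv.symm_apply_eq, Equiv.funSplitAt_apply, Prod.ext_iff]
  rw [exists_eq_left, eq_comm, funext_iff]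

theorem disjoint_axisLine {i : ι} {z z' : {j // j ≠ i} → α} (hz : z ≠ z') :
    Disjoint (axisLine i z) (axisLine i z') := by
  rw [disjoint_left]
  intro p hp hp'
  exact hz (funext fun j => (mem_axisLine.1 hp j).symm.trans (mem_axisLine.1 hp' j))

theorem eq_of_mem_axisLine_inter [Fintype ι] [DecidableEq α] {i i' : ι} (hi : i ≠ i')
    {z : {j // j ≠ i} → α} {z' : {j // j ≠ i'} → α} {p q : ι → α}
    (hp : p ∈ axisLine i z ∩ axisLine i' z') (hq : q ∈ axisLine i z ∩ axisLine i' z') :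
    p = q := by
  simp only [mem_inter, mem_axisLine] at hp hq
  funext j
  by_cases hj : j = i
  · subst hj
    exact (hp.2 ⟨j, hi⟩).trans (hq.2 ⟨j, hi⟩).symm
  · exact (hp.1 ⟨j, hj⟩).trans (hq.1 ⟨j, hj⟩).symm

def axisLines {κ : Type*} (e : κ → ι) (x : Σ t : κ, {j // j ≠ e t} → α) : Finset (ι → α) :=
  axisLine (e x.1) x.2

theorem pairwise_card_inter_axisLines_le_one [Fintype ι] [DecidableEq α] {κ : Type*}
    {e : κ → ι} (he : Injective e) :
    Pairwise fun x y => #(axisLines (α := α) e x ∩ axisLines e y) ≤ 1 := by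
  rintro ⟨t, z⟩ ⟨t', z'⟩ hne
  rw [card_le_one]
  by_cases ht : t = t'
  · subst ht
    have hz : z ≠ z' := fun hz => hne (by rw [hz])
    simp [axisLines, disjoint_iff_inter_eq_empty.mp (disjoint_axisLine hz)]
  · exact fun p hp q hq => eq_of_mem_axisLine_inter (he.ne ht) hp hq

end AxisLines

theorem pir_code_of_dual_product_packing_general (h l v : ℕ) (hvl : v ≤ l) (s : ℕ)
    (hs : s = v * h ^ (l - 1)) :
    ExistsPIRCode s (s + h ^ l) (h + 1) := by
  have hcard : ∀ x, #(axisLines (α := Fin h) (Fin.castLE hvl) x) = h := fun x =>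
    (card_axisLine _ _).trans (Fintype.card_fin h)
  have hmeet := pairwise_card_inter_axisLines_le_one (α := Fin h) (Fin.castLE_injective hvl)
  refine (isPIRGenerator_dualGenerator _ hcard hmeet).existsPIRCode ?_ ?_ <;>
    simp [hs]

/-- Let `h ≥ 2`, `ℓ ≥ 2`, and `2 ≤ v ≤ ℓ`; set `s = v·h^{ℓ-1}`.
Then there exists an `(h+1)`-server PIR `[s + h^ℓ, s]`-code (from the dual of the
configuration given by `v` coset partitions of `C_h^ℓ`). -/
theorem pir_code_of_dual_product_packing (h l v : ℕ) (hh : 2 ≤ h) (hl : 2 ≤ l)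
    (hv2 : 2 ≤ v) (hvl : v ≤ l) (s : ℕ) (hs : s = v * h ^ (l - 1)) :
    ExistsPIRCode s (s + h ^ l) (h + 1) :=
  pir_code_of_dual_product_packing_general h l v hvl s hs
end
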